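/- Let f : (0,1] → {0,1} be defined by f(x) = 1 if x ∈ (2^{−n−1}, 2^{−n}] for some even integer n ≥ 0, and f(x) = 0 otherwise. Let M ≥ 0 be an integer and let g : (0,1] → {0,1} be any step function with at most M discontinuities. Then μ({x ∈ (0,1] : g(x) ≠ f(x)}) ≥ 2^{−(2M+2)}, where μ is the Lebesgue measure. Equivalently, μ({x ∈ (0,1] : g(x) = f(x)}) ≤ 1 − 2^{−(2M+2)}. -/
import Mathlib


open MeasureTheory

/-- `g : (0,1] → T` is a step function with at most `M` discontinuities:
there is a partition `0 = α_{p+1} < α_p < ⋯ < α_1 < α_0 = 1` of `(0,1]` with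
`p ≤ M`, into at most `M + 1` left-open right-closed intervals, on each of
which `g` is constant. -/
def IsStepFun {T : Type*} (M : ℕ) (g : ℝ → T) : Prop :=
  ∃ p ≤ M, ∃ α : Fin (p + 2) → ℝ,
    α 0 = 1 ∧ α (Fin.last (p + 1)) = 0 ∧ StrictAnti α ∧
    ∀ k : Fin (p + 1), ∃ c : T, ∀ x ∈ Set.Ioc (α k.succ) (α k.castSucc), g x = c

open Classical in
/-- The alternating dyadic function `f : (0,1] → {0,1}`: `f(x) = 1` iff
`x ∈ (2^{-n-1}, 2^{-n}]` for some even `n ≥ 0`. -/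
noncomputable def fDyadic (x : ℝ) : Bool :=
  decide (∃ n : ℕ, Even n ∧ x ∈ Set.Ioc ((2 : ℝ) ^ (-(n : ℤ) - 1)) ((2 : ℝ) ^ (-(n : ℤ))))

/-- `U(x) = #{i : f_i(x) = 1}`. -/
def Ucount {K : ℕ} (f : Fin K → ℝ → Bool) (x : ℝ) : ℕ :=
  (Finset.univ.filter fun i => f i x = true).card

/-- The majority-vote function: `g(x) = 1` iff `U(x)/K ≥ 1/2`. -/
noncomputable def majority {K : ℕ} (f : Fin K → ℝ → Bool) (x : ℝ) : Bool :=
  decide ((1 : ℝ) / 2 ≤ (Ucount f x : ℝ) / K)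

noncomputable def dp (n : ℕ) : ℝ := (2:ℝ) ^ (-(n:ℤ))

lemma dp_pos (n : ℕ) : 0 < dp n := zpow_pos two_pos _

lemma dp_le_one (n : ℕ) : dp n ≤ 1 := by
  have : dp n ≤ dp 0 := zpow_le_zpow_right₀ one_le_two (by omega)
  simpa [dp] using this

lemma dp_succ_lt (n : ℕ) : dp (n+1) < dp n :=
  zpow_lt_zpow_right₀ one_lt_two (by omega)

lemma dp_anti {m n : ℕ} (h : m ≤ n) : dp n ≤ dp m :=
  zpow_le_zpow_right₀ one_le_two (by omega)

lemma dp_succ (n : ℕ) : dp (n+1) = (2:ℝ) ^ (-(n:ℤ) - 1) := by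
  simp [dp]; ring_nf

lemma dp_disjoint {m n : ℕ} (h : m ≠ n) :
    Disjoint (Set.Ioc (dp (m+1)) (dp m)) (Set.Ioc (dp (n+1)) (dp n)) := by
  rw [Set.disjoint_left]
  rintro x ⟨h1, h2⟩ ⟨h3, h4⟩
  rcases Nat.lt_or_ge m n with h' | h'
  · have := dp_anti (show m + 1 ≤ n by omega); linarith
  · have := dp_anti (show n + 1 ≤ m by omega); linarith

lemma fDyadic_eq {n : ℕ} {x : ℝ} (hx : x ∈ Set.Ioc (dp (n+1)) (dp n)) :
    fDyadic x = decide (Even n) := by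
  have key : ∀ m : ℕ, x ∈ Set.Ioc ((2:ℝ) ^ (-(m:ℤ) - 1)) ((2:ℝ) ^ (-(m:ℤ))) → m = n := by
    intro m hm
    rw [← dp_succ] at hm
    by_contra hmn
    exact (dp_disjoint hmn).ne_of_mem hm hx rfl
  unfold fDyadic
  rw [decide_eq_decide]
  constructor
  · rintro ⟨m, hme, hmx⟩
    exact (key m hmx) ▸ hme
  · intro hn
    exact ⟨n, hn, by rwa [← dp_succ]⟩

lemma dp_half (n : ℕ) : dp n - dp (n+1) = dp (n+1) := by
  have h : dp (n+1) = dp n * (1/2) := by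
    unfold dp
    rw [show (-(↑(n+1):ℤ)) = -(n:ℤ) + (-1) by push_cast; ring, zpow_add₀ two_ne_zero,
      zpow_neg_one]
    norm_num
  rw [h]; ring

lemma measurableSet_fDyadic : MeasurableSet {x : ℝ | fDyadic x = true} := by
  have : {x : ℝ | fDyadic x = true} =
      ⋃ n : ℕ, {x | Even n ∧ x ∈ Set.Ioc (dp (n+1)) (dp n)} := by
    ext x
    simp only [Set.mem_setOf_eq, Set.mem_iUnion, fDyadic, decide_eq_true_eq]
    constructor
    · rintro ⟨n, h1, h2⟩; exact ⟨n, h1, by rwa [dp_succ]⟩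
    · rintro ⟨n, h1, h2⟩; exact ⟨n, h1, by rwa [← dp_succ]⟩
  rw [this]
  refine MeasurableSet.iUnion fun n => ?_
  by_cases hn : Even n
  · simp only [hn, true_and]; exact measurableSet_Ioc
  · simp only [hn, false_and]; simp

section pieces
variable {p : ℕ} {α : Fin (p+2) → ℝ}

lemma exists_piece (hα0 : α 0 = 1) (hlast : α (Fin.last (p+1)) = 0) {x : ℝ} (hx : x ∈ Set.Ioc (0:ℝ) 1) :
    ∃ k : Fin (p+1), x ∈ Set.Ioc (α k.succ) (α k.castSucc) := by
  classical
  obtain ⟨hx0, hx1⟩ := hx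
  set S : Finset (Fin (p+2)) := Finset.univ.filter (fun i => x ≤ α i) with hS
  have h0 : (0 : Fin (p+2)) ∈ S := by simp [hS, hα0, hx1]
  set j := S.max' ⟨0, h0⟩ with hj
  have hjS : j ∈ S := S.max'_mem _
  have hjx : x ≤ α j := by simpa [hS] using hjS
  have hjne : j ≠ Fin.last (p+1) := by
    intro h; rw [h, hlast] at hjx; linarith
  have hjv : j.val < p + 1 := by
    have := j.isLt
    have : j.val ≠ p + 1 := fun h => hjne (Fin.ext h)
    omega
  refine ⟨⟨j.val, hjv⟩, ?_, ?_⟩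
  · by_contra h
    push_neg at h
    have hmem : (⟨j.val + 1, by omega⟩ : Fin (p+2)) ∈ S := by
      simp only [hS, Finset.mem_filter, Finset.mem_univ, true_and]
      exact h
    have hle := S.le_max' _ hmem
    have hle' : j.val + 1 ≤ j.val := by
      have h2 := Fin.le_def.mp hle
      have h3 := congrArg Fin.val hj
      simp only [Fin.val_mk] at h2 h3 ⊢
      omega
    omega
  · have heq : (⟨j.val, hjv⟩ : Fin (p+1)).castSucc = j := Fin.ext rfl
    rw [heq]; exact hjx

lemma piece_subset (hα0 : α 0 = 1) (hlast : α (Fin.last (p+1)) = 0) (hanti : StrictAnti α) (k : Fin (p+1)) :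
    Set.Ioc (α k.succ) (α k.castSucc) ⊆ Set.Ioc (0:ℝ) 1 := by
  intro x ⟨h1, h2⟩
  constructor
  · have : α (Fin.last (p+1)) ≤ α k.succ := hanti.antitone (Fin.le_last _)
    rw [hlast] at this; linarith
  · have : α k.castSucc ≤ α 0 := hanti.antitone (Fin.zero_le _)
    rw [hα0] at this; linarith

lemma exists_good (hα0 : α 0 = 1) (hlast : α (Fin.last (p+1)) = 0) {M : ℕ} (hp : p ≤ M) :
    ∃ j : Fin (M+1), ∀ i : Fin (p+2),
      α i ∉ Set.Ioo (dp (2*j.val+2)) (dp (2*j.val)) := by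
  by_contra h
  push_neg at h
  choose ι hι using h
  have h0 : ∀ j, ι j ≠ 0 := by
    intro j hj
    have h2 := (hι j).2
    rw [hj, hα0] at h2
    have := dp_le_one (2*j.val)
    linarith
  have hl : ∀ j, ι j ≠ Fin.last (p+1) := by
    intro j hj
    have h1 := (hι j).1
    rw [hj, hlast] at h1
    have := dp_pos (2*j.val+2)
    linarith
  have hinj : Function.Injective ι := by
    intro j j' hjj'
    by_contra hne
    have hne' : j.val ≠ j'.val := fun h => hne (Fin.ext h)
    have m1 := hι j
    have m2 := hι j'
    rw [hjj'] at m1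
    obtain ⟨a1, b1⟩ := m1
    obtain ⟨a2, b2⟩ := m2
    rcases Nat.lt_or_ge j.val j'.val with h' | h'
    · have := dp_anti (show 2*j.val + 2 ≤ 2*j'.val by omega); linarith
    · have := dp_anti (show 2*j'.val + 2 ≤ 2*j.val by omega); linarith
  have hcard : (M + 1) ≤ p := by
    have hTsub : ∀ j : Fin (M+1), j ∈ Finset.univ →
        ι j ∈ (Finset.univ \ {0, Fin.last (p+1)} : Finset (Fin (p+2))) := by
      intro j _
      simp only [Finset.mem_sdiff, Finset.mem_univ, true_and, Finset.mem_insert,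
        Finset.mem_singleton]
      push_neg
      exact ⟨h0 j, hl j⟩
    have := Finset.card_le_card_of_injOn ι hTsub (hinj.injOn)
    have h2 : ({0, Fin.last (p+1)} : Finset (Fin (p+2))).card = 2 := by
      rw [Finset.card_pair]
      intro h
      have := Fin.ext_iff.mp h
      simp only [Fin.val_zero, Fin.val_last] at this
      omega
    rw [Finset.card_sdiff_of_subset (by simp)] at this
    simp only [Finset.card_univ, Fintype.card_fin, h2] at this
    omega
  omega

end pieces

/-- Any step function `g : (0,1] → {0,1}` with at most `M` discontinuities disagrees
with the alternating dyadic function `f` on a set of Lebesgue measure at least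
`2^{-(2M+2)}`; equivalently, it agrees with `f` on a set of measure at most
`1 - 2^{-(2M+2)}`. -/
theorem step_function_disagrees_with_dyadic_function
    (M : ℕ) (g : ℝ → Bool) (hg : IsStepFun M g) :
    ENNReal.ofReal ((2 : ℝ) ^ (-(2 * M + 2 : ℤ))) ≤
      volume {x ∈ Set.Ioc (0 : ℝ) 1 | g x ≠ fDyadic x} ∧
    volume {x ∈ Set.Ioc (0 : ℝ) 1 | g x = fDyadic x} ≤
      ENNReal.ofReal (1 - (2 : ℝ) ^ (-(2 * M + 2 : ℤ))) := by
  obtain ⟨p, hp, α, hα0, hlast, hanti, hc'⟩ := hg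
  choose c hc using hc'
  set D := {x ∈ Set.Ioc (0:ℝ) 1 | g x ≠ fDyadic x} with hD
  have hexp : (2:ℝ) ^ (-(2 * (M:ℤ) + 2)) = dp (2*M+2) := by
    show (2:ℝ) ^ (-(2 * (M:ℤ) + 2)) = (2:ℝ) ^ (-((2*M+2 : ℕ) : ℤ))
    congr 1
  have key : ENNReal.ofReal ((2:ℝ) ^ (-(2 * M + 2 : ℤ))) ≤ volume D := by
    obtain ⟨j, hj⟩ := exists_good hα0 hlast hp
    have hab : dp (2*j.val+2) < dp (2*j.val+1) := dp_succ_lt _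
    have hmb : dp (2*j.val+1) < dp (2*j.val) := dp_succ_lt _
    obtain ⟨k, hk1, hk2⟩ := exists_piece hα0 hlast
      (⟨dp_pos _, dp_le_one _⟩ : dp (2*j.val) ∈ Set.Ioc (0:ℝ) 1)
    have hsub : Set.Ioc (dp (2*j.val+2)) (dp (2*j.val)) ⊆
        Set.Ioc (α k.succ) (α k.castSucc) := by
      have hks : α k.succ ≤ dp (2*j.val+2) := by
        by_contra hco
        push_neg at hco
        exact hj k.succ ⟨hco, hk1⟩
      rintro x ⟨hx1, hx2⟩
      exact ⟨lt_of_le_of_lt hks hx1, le_trans hx2 hk2⟩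
    have hgc : ∀ x ∈ Set.Ioc (dp (2*j.val+2)) (dp (2*j.val)), g x = c k :=
      fun x hx => hc k x (hsub hx)
    cases hck : c k with
    | true =>
      have hsub2 : Set.Ioc (dp (2*j.val+2)) (dp (2*j.val+1)) ⊆ D := by
        intro x hx
        have hxab : x ∈ Set.Ioc (dp (2*j.val+2)) (dp (2*j.val)) :=
          ⟨hx.1, le_trans hx.2 (le_of_lt hmb)⟩
        refine ⟨piece_subset hα0 hlast hanti k (hsub hxab), ?_⟩
        rw [hgc x hxab, hck, fDyadic_eq hx]
        simp [Nat.even_add_one]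
      calc ENNReal.ofReal ((2:ℝ) ^ (-(2 * M + 2 : ℤ)))
          ≤ volume (Set.Ioc (dp (2*j.val+2)) (dp (2*j.val+1))) := by
            rw [Real.volume_Ioc]
            apply ENNReal.ofReal_le_ofReal
            rw [show dp (2*j.val+1) - dp (2*j.val+2) = dp (2*j.val+2) from
              dp_half (2*j.val+1), hexp]
            exact dp_anti (by omega)
        _ ≤ volume D := measure_mono hsub2
    | false =>
      have hsub2 : Set.Ioc (dp (2*j.val+1)) (dp (2*j.val)) ⊆ D := by
        intro x hx
        have hxab : x ∈ Set.Ioc (dp (2*j.val+2)) (dp (2*j.val)) :=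
          ⟨lt_trans hab hx.1, hx.2⟩
        refine ⟨piece_subset hα0 hlast hanti k (hsub hxab), ?_⟩
        rw [hgc x hxab, hck, fDyadic_eq hx]
        simp [even_two_mul]
      calc ENNReal.ofReal ((2:ℝ) ^ (-(2 * M + 2 : ℤ)))
          ≤ volume (Set.Ioc (dp (2*j.val+1)) (dp (2*j.val))) := by
            rw [Real.volume_Ioc]
            apply ENNReal.ofReal_le_ofReal
            rw [show dp (2*j.val) - dp (2*j.val+1) = dp (2*j.val+1) from
              dp_half (2*j.val), hexp]
            exact dp_anti (by omega)
        _ ≤ volume D := measure_mono hsub2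
  refine ⟨key, ?_⟩
  have hDeq : D = ⋃ k : Fin (p+1),
      (Set.Ioc (α k.succ) (α k.castSucc) ∩ {x | c k ≠ fDyadic x}) := by
    ext x
    simp only [hD, Set.mem_sep_iff, Set.mem_iUnion, Set.mem_inter_iff, Set.mem_setOf_eq]
    constructor
    · rintro ⟨hx1, hx2⟩
      obtain ⟨k, hk⟩ := exists_piece hα0 hlast hx1
      exact ⟨k, hk, (hc k x hk) ▸ hx2⟩
    · rintro ⟨k, hk1, hk2⟩
      exact ⟨piece_subset hα0 hlast hanti k hk1, by rw [hc k x hk1]; exact hk2⟩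
  have hDmeas : MeasurableSet D := by
    rw [hDeq]
    refine MeasurableSet.iUnion fun k => measurableSet_Ioc.inter ?_
    cases hck : c k with
    | false =>
      have h1 : {x : ℝ | false ≠ fDyadic x} = {x | fDyadic x = true} := by
        ext x; simp
      rw [h1]
      exact measurableSet_fDyadic
    | true =>
      have h1 : {x : ℝ | true ≠ fDyadic x} = {x | fDyadic x = true}ᶜ := by
        ext x; simp
      rw [h1]
      exact measurableSet_fDyadic.compl
  have hDsub : D ⊆ Set.Ioc (0:ℝ) 1 := fun x hx => hx.1
  have hDne : volume D ≠ ⊤ := by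
    refine ((measure_mono hDsub).trans_lt ?_).ne
    rw [Real.volume_Ioc]
    exact ENNReal.ofReal_lt_top
  have hA : {x ∈ Set.Ioc (0:ℝ) 1 | g x = fDyadic x} = Set.Ioc (0:ℝ) 1 \ D := by
    ext x
    simp only [hD, Set.mem_sep_iff, Set.mem_diff, not_and, ne_eq, not_not]
    constructor
    · rintro ⟨h1, h2⟩
      exact ⟨h1, fun _ => h2⟩
    · rintro ⟨h1, h2⟩
      exact ⟨h1, h2 h1⟩
  rw [hA, measure_diff hDsub hDmeas.nullMeasurableSet hDne]
  have hpos : (0:ℝ) ≤ (2:ℝ) ^ (-(2 * M + 2 : ℤ)) := le_of_lt (zpow_pos two_pos _)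
  rw [ENNReal.ofReal_sub _ hpos]
  have h10 : volume (Set.Ioc (0:ℝ) 1) = 1 := by
    rw [Real.volume_Ioc]; norm_num
  rw [h10, ENNReal.ofReal_one]
  exact tsub_le_tsub_left key 1
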